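/- With the multi-commodity structured tensors K and U as in the previous context, the single-marginal projections satisfy P_t(K⊙U) = u_t ⊙ ((Ψ̂_t ⊙ Ψ_t ⊙ K_L)ᵀ 𝟏) for t = 2,…,T−1, and P₀(K⊙U) = (Ψ̂_t ⊙ Ψ_t ⊙ K_L) u_t (for any such t). -/
import Mathlib

set_option maxHeartbeats 1000000

namespace Stmt13

open Finset

/-- Forward matrix messages: `Ψ̂₂ = U^{(0,1)} K` and
`Ψ̂_t = (Ψ̂_{t−1} ⊙ K_L) diag(u_{t−1}) K` (here `psihatM m = Ψ̂_{m+2}`). -/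
def psihatM (L n : ℕ) (KL : Fin L → Fin n → ℝ) (Km : Matrix (Fin n) (Fin n) ℝ)
    (U01 : Fin L → Fin n → ℝ) (u : ℕ → Fin n → ℝ) : ℕ → Fin L → Fin n → ℝ
  | 0 => fun l j => ∑ i, U01 l i * Km i j
  | m + 1 => fun l j =>
      ∑ i, (psihatM L n KL Km U01 u m l i * KL l i) * u m i * Km i j

/-- Backward matrix messages counted from the end: `Ψ_{T−1} = U^{(0,T)} Kᵀ` and
`Ψ_t = (Ψ_{t+1} ⊙ K_L) diag(u_{t+1}) Kᵀ` (here `psiM m = Ψ_{T+1−m}`). -/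
def psiM (L n : ℕ) (KL : Fin L → Fin n → ℝ) (Km : Matrix (Fin n) (Fin n) ℝ)
    (U0T : Fin L → Fin n → ℝ) (u : ℕ → Fin n → ℝ) (T : ℕ) : ℕ → Fin L → Fin n → ℝ
  | 0 => fun l j => ∑ i, U0T l i * Km j i
  | m + 1 => fun l j =>
      ∑ i, (psiM L n KL Km U0T u T m l i * KL l i) * u (T - 1 - m) i * Km j i

/-- The multi-commodity structured tensor `K ⊙ U`. -/
def KU (L n T : ℕ) (KL : Fin L → Fin n → ℝ) (Km : Matrix (Fin n) (Fin n) ℝ)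
    (U01 U0T : Fin L → Fin n → ℝ) (u : ℕ → Fin n → ℝ)
    (l : Fin L) (x : Fin (T + 2) → Fin n) : ℝ :=
  ((∏ t : Fin T, KL l (x t.succ.castSucc)) *
      ∏ s : Fin (T + 1), Km (x s.castSucc) (x s.succ)) *
    (U01 l (x 0) * U0T l (x (Fin.last (T + 1))) *
      ∏ t : Fin T, u t.val (x t.succ.castSucc))

/- ### Generic path-sum machinery -/

lemma sum_pi_succ {n m : ℕ} (F : (Fin (m+1) → Fin n) → ℝ) :
    ∑ x : Fin (m+1) → Fin n, F x = ∑ i : Fin n, ∑ y : Fin m → Fin n, F (Fin.cons i y) := by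
  rw [← (Fin.consEquiv (fun _ : Fin (m+1) => Fin n)).sum_comp, Fintype.sum_prod_type]
  rfl

lemma sum_pi_one {n : ℕ} (F : (Fin 1 → Fin n) → ℝ) :
    ∑ x : Fin 1 → Fin n, F x = ∑ i : Fin n, F (fun _ => i) := by
  rw [← (Equiv.funUnique (Fin 1) (Fin n)).symm.sum_comp]
  apply Finset.sum_congr rfl
  intro i _
  congr 1

variable {n : ℕ}

/-- Backward message: paths of `q` edges starting at `j`, weights `W o, W (o+1), …`. -/
def back (W : ℕ → Fin n → Fin n → ℝ) (b : Fin n → ℝ) : ℕ → ℕ → Fin n → ℝ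
  | _, 0 => b
  | o, q+1 => fun j => ∑ i, W o j i * back W b (o+1) q i

/-- Forward message, defined by peeling off the first edge. -/
def fwd (W : ℕ → Fin n → Fin n → ℝ) : ℕ → (Fin n → ℝ) → ℕ → Fin n → ℝ
  | _, a, 0 => a
  | o, a, p+1 => fwd W (o+1) (fun k => ∑ i, a i * W o i k) p

lemma fwd_succ_right (W : ℕ → Fin n → Fin n → ℝ) :
    ∀ (p o : ℕ) (a : Fin n → ℝ) (j : Fin n),
    fwd W o a (p+1) j = ∑ i, fwd W o a p i * W (o+p) i j := by
  intro p
  induction p with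
  | zero => intro o a j; simp [fwd]
  | succ p ih =>
      intro o a j
      show fwd W (o+1) _ (p+1) j = _
      rw [ih]
      have h : o + 1 + p = o + (p+1) := by omega
      rw [h]
      rfl

lemma cons_prod_split {m : ℕ} (W : ℕ → Fin n → Fin n → ℝ) (o : ℕ) (i : Fin n)
    (y : Fin (m+1) → Fin n) :
    (∏ s : Fin (m+1), W (o + s)
        ((Fin.cons i y : Fin (m+2) → Fin n) s.castSucc)
        ((Fin.cons i y : Fin (m+2) → Fin n) s.succ))
      = W o i (y 0) * ∏ s : Fin m, W (o + 1 + s) (y s.castSucc) (y s.succ) := by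
  rw [Fin.prod_univ_succ]
  refine congrArg₂ (· * ·) ?_ (Finset.prod_congr rfl fun s _ => ?_)
  · simp
  · have h1 : ((Fin.cons i y : Fin (m+2) → Fin n) (s.succ.castSucc)) = y s.castSucc := by
      rw [← Fin.succ_castSucc]
      simp
    have h2 : ((Fin.cons i y : Fin (m+2) → Fin n) (s.succ.succ)) = y s.succ := by
      simp
    have harg : o + ((s.succ : Fin (m+1)) : ℕ) = o + 1 + (s : ℕ) := by
      rw [Fin.val_succ]; ring
    rw [h1, h2, harg]

lemma cons_last {m : ℕ} (i : Fin n) (y : Fin (m+1) → Fin n) :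
    (Fin.cons i y : Fin (m+2) → Fin n) (Fin.last (m+1)) = y (Fin.last m) := by
  have h : Fin.last (m+1) = (Fin.last m).succ := (Fin.succ_last m).symm
  rw [h]
  exact Fin.cons_succ (α := fun _ : Fin (m+2) => Fin n) i y (Fin.last m)

/-- Path-sum lemma, no indicator. -/
lemma sum_path (W : ℕ → Fin n → Fin n → ℝ) (b : Fin n → ℝ) :
    ∀ (m o : ℕ) (a : Fin n → ℝ),
    (∑ x : Fin (m+1) → Fin n,
        a (x 0) * ((∏ s : Fin m, W (o + s) (x s.castSucc) (x s.succ)) * b (x (Fin.last m))))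
      = ∑ j, a j * back W b o m j := by
  intro m
  induction m with
  | zero =>
      intro o a
      rw [sum_pi_one]
      simp [back, Fin.last]
  | succ m ih =>
      intro o a
      rw [sum_pi_succ]
      have step1 : ∀ i : Fin n, ∀ y : Fin (m+1) → Fin n,
          a ((Fin.cons i y : Fin (m+2) → Fin n) 0) *
            ((∏ s : Fin (m+1), W (o + s)
                ((Fin.cons i y : Fin (m+2) → Fin n) s.castSucc)
                ((Fin.cons i y : Fin (m+2) → Fin n) s.succ)) *
              b ((Fin.cons i y : Fin (m+2) → Fin n) (Fin.last (m+1))))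
          = (a i * W o i (y 0)) *
              ((∏ s : Fin m, W (o + 1 + s) (y s.castSucc) (y s.succ)) * b (y (Fin.last m))) := by
        intro i y
        rw [cons_prod_split, cons_last, Fin.cons_zero]
        ring
      have step2 : ∑ i : Fin n, ∑ y : Fin (m+1) → Fin n,
          a ((Fin.cons i y : Fin (m+2) → Fin n) 0) *
            ((∏ s : Fin (m+1), W (o + s)
                ((Fin.cons i y : Fin (m+2) → Fin n) s.castSucc)
                ((Fin.cons i y : Fin (m+2) → Fin n) s.succ)) *
              b ((Fin.cons i y : Fin (m+2) → Fin n) (Fin.last (m+1))))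
          = ∑ y : Fin (m+1) → Fin n,
              (∑ i, a i * W o i (y 0)) *
                ((∏ s : Fin m, W (o + 1 + s) (y s.castSucc) (y s.succ)) * b (y (Fin.last m))) := by
        rw [Finset.sum_comm]
        apply Finset.sum_congr rfl
        intro y _
        rw [Finset.sum_mul]
        exact Finset.sum_congr rfl fun i _ => step1 i y
      rw [step2, ih (o+1) (fun k => ∑ i, a i * W o i k)]
      show _ = ∑ j, a j * ∑ i, W o j i * back W b (o+1) m i
      simp only [Finset.sum_mul, Finset.mul_sum]
      rw [Finset.sum_comm]
      exact Finset.sum_congr rfl fun j _ => Finset.sum_congr rfl fun i _ => by ring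

/-- Path-sum lemma with an indicator fixing the vertex at position `p`. -/
lemma sum_path_split (W : ℕ → Fin n → Fin n → ℝ) (b : Fin n → ℝ) :
    ∀ (p m q o : ℕ) (hm : p + q = m) (a : Fin n → ℝ) (j : Fin n),
    (∑ x : Fin (m+1) → Fin n,
        if x ⟨p, by omega⟩ = j then
          a (x 0) * ((∏ s : Fin m, W (o + s) (x s.castSucc) (x s.succ)) * b (x (Fin.last m)))
        else 0)
      = fwd W o a p j * back W b (o+p) q j := by
  intro p
  induction p with
  | zero =>
      intro m q o hm a j
      have hq : q = m := by omega
      subst hq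
      have h0 : (⟨0, by omega⟩ : Fin (q+1)) = 0 := rfl
      have trans1 : (∑ x : Fin (q+1) → Fin n,
          if x ⟨0, by omega⟩ = j then
            a (x 0) * ((∏ s : Fin q, W (o + s) (x s.castSucc) (x s.succ)) * b (x (Fin.last q)))
          else 0)
          = ∑ x : Fin (q+1) → Fin n,
            (if x 0 = j then a (x 0) else 0) *
              ((∏ s : Fin q, W (o + s) (x s.castSucc) (x s.succ)) * b (x (Fin.last q))) := by
        apply Finset.sum_congr rfl
        intro x _
        rw [h0]
        by_cases hx : x 0 = j
        · simp [hx]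
        · simp [hx]
      rw [trans1, sum_path W b q o (fun i => if i = j then a i else 0)]
      show (∑ k, (if k = j then a k else 0) * back W b o q k) = a j * back W b (o+0) q j
      rw [Nat.add_zero]
      rw [Finset.sum_congr rfl (fun k _ => ite_zero_mul (k = j) (a k) (back W b o q k))]
      simp
  | succ p ih =>
      intro m q o hm a j
      obtain ⟨m', rfl⟩ : ∃ m', m = m' + 1 := ⟨m - 1, by omega⟩
      have hm' : p + q = m' := by omega
      rw [sum_pi_succ]
      have step1 : ∀ i : Fin n, ∀ y : Fin (m'+1) → Fin n,
          (if (Fin.cons i y : Fin (m'+2) → Fin n) ⟨p+1, by omega⟩ = j then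
            a ((Fin.cons i y : Fin (m'+2) → Fin n) 0) *
              ((∏ s : Fin (m'+1), W (o + s)
                  ((Fin.cons i y : Fin (m'+2) → Fin n) s.castSucc)
                  ((Fin.cons i y : Fin (m'+2) → Fin n) s.succ)) *
                b ((Fin.cons i y : Fin (m'+2) → Fin n) (Fin.last (m'+1))))
          else 0)
          = (if y ⟨p, by omega⟩ = j then
              (a i * W o i (y 0)) *
                ((∏ s : Fin m', W (o + 1 + s) (y s.castSucc) (y s.succ)) * b (y (Fin.last m')))
            else 0) := by
        intro i y
        have hpp : ((Fin.cons i y : Fin (m'+2) → Fin n) ⟨p+1, by omega⟩) = y ⟨p, by omega⟩ := by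
          have : (⟨p+1, by omega⟩ : Fin (m'+2)) = (⟨p, by omega⟩ : Fin (m'+1)).succ := rfl
          rw [this]
          exact Fin.cons_succ (α := fun _ : Fin (m'+2) => Fin n) i y _
        rw [hpp, cons_prod_split, cons_last, Fin.cons_zero]
        split
        · ring
        · rfl
      calc (∑ i : Fin n, ∑ y : Fin (m'+1) → Fin n,
              if (Fin.cons i y : Fin (m'+2) → Fin n) ⟨p+1, by omega⟩ = j then
                a ((Fin.cons i y : Fin (m'+2) → Fin n) 0) *
                  ((∏ s : Fin (m'+1), W (o + s)
                      ((Fin.cons i y : Fin (m'+2) → Fin n) s.castSucc)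
                      ((Fin.cons i y : Fin (m'+2) → Fin n) s.succ)) *
                    b ((Fin.cons i y : Fin (m'+2) → Fin n) (Fin.last (m'+1))))
              else 0)
          = ∑ y : Fin (m'+1) → Fin n,
              (if y ⟨p, by omega⟩ = j then
                (∑ i, a i * W o i (y 0)) *
                  ((∏ s : Fin m', W (o + 1 + s) (y s.castSucc) (y s.succ)) * b (y (Fin.last m')))
              else 0) := by
            rw [Finset.sum_comm]
            apply Finset.sum_congr rfl
            intro y _
            rw [Finset.sum_congr rfl (fun i _ => step1 i y)]
            by_cases hy : y ⟨p, by omega⟩ = j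
            · simp only [if_pos hy, Finset.sum_mul]
            · simp only [if_neg hy, Finset.sum_const_zero]
        _ = fwd W (o+1) (fun k => ∑ i, a i * W o i k) p j * back W b (o+1+p) q j :=
            ih m' q (o+1) hm' (fun k => ∑ i, a i * W o i k) j
        _ = fwd W o a (p+1) j * back W b (o+(p+1)) q j := by
            have h1 : o + 1 + p = o + (p + 1) := by omega
            rw [h1]
            rfl

/- ### Specialization to the structured tensor -/

/-- The edge weights: `Km` times the vertex factor at the target vertex. -/
def Wt {L : ℕ} (T : ℕ) (KL : Fin L → Fin n → ℝ) (Km : Matrix (Fin n) (Fin n) ℝ)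
    (u : ℕ → Fin n → ℝ) (l : Fin L) (s : ℕ) (i j : Fin n) : ℝ :=
  Km i j * (if s < T then KL l j * u s j else 1)

lemma KU_eq {L : ℕ} (T : ℕ) (KL : Fin L → Fin n → ℝ) (Km : Matrix (Fin n) (Fin n) ℝ)
    (U01 U0T : Fin L → Fin n → ℝ) (u : ℕ → Fin n → ℝ) (l : Fin L)
    (x : Fin (T+2) → Fin n) :
    KU L n T KL Km U01 U0T u l x =
      U01 l (x 0) *
        ((∏ s : Fin (T+1), Wt T KL Km u l s (x s.castSucc) (x s.succ)) *
          U0T l (x (Fin.last (T+1)))) := by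
  unfold KU Wt
  rw [Finset.prod_mul_distrib]
  have hc : (∏ s : Fin (T+1),
      (if (s : ℕ) < T then KL l (x s.succ) * u s (x s.succ) else 1))
      = (∏ t : Fin T, KL l (x t.succ.castSucc)) * ∏ t : Fin T, u t.val (x t.succ.castSucc) := by
    rw [Fin.prod_univ_castSucc, ← Finset.prod_mul_distrib]
    have hlast : (if ((Fin.last T : Fin (T+1)) : ℕ) < T then
        KL l (x (Fin.last T).succ) * u (Fin.last T) (x (Fin.last T).succ) else 1) = 1 := by
      rw [if_neg]
      simp [Fin.last]
    rw [hlast, mul_one]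
    apply Finset.prod_congr rfl
    intro t _
    rw [if_pos (by simp [Fin.castSucc] : ((t.castSucc : Fin (T+1)) : ℕ) < T)]
    rw [Fin.succ_castSucc, Fin.coe_castSucc]
  rw [hc]
  ring

lemma fwd_eq_psihat {L : ℕ} (T : ℕ) (KL : Fin L → Fin n → ℝ) (Km : Matrix (Fin n) (Fin n) ℝ)
    (U01 : Fin L → Fin n → ℝ) (u : ℕ → Fin n → ℝ) (l : Fin L) :
    ∀ m, m < T → ∀ j,
    fwd (Wt T KL Km u l) 0 (U01 l) (m+1) j
      = psihatM L n KL Km U01 u m l j * (KL l j * u m j) := by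
  intro m
  induction m with
  | zero =>
      intro h0 j
      rw [fwd_succ_right]
      show (∑ i, U01 l i * Wt T KL Km u l (0+0) i j) = _
      rw [psihatM]
      rw [Finset.sum_mul]
      apply Finset.sum_congr rfl
      intro i _
      unfold Wt
      rw [if_pos (by omega : 0 + 0 < T)]
      ring
  | succ m ih =>
      intro h j
      rw [fwd_succ_right]
      have hstep : ∀ i, fwd (Wt T KL Km u l) 0 (U01 l) (m+1) i
          = psihatM L n KL Km U01 u m l i * (KL l i * u m i) := ih (by omega)
      rw [Finset.sum_congr rfl (fun i _ => by rw [hstep i])]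
      rw [psihatM]
      rw [Finset.sum_mul]
      apply Finset.sum_congr rfl
      intro i _
      unfold Wt
      rw [if_pos (by omega : 0 + (m+1) < T)]
      ring

lemma back_eq_psi {L : ℕ} (T : ℕ) (KL : Fin L → Fin n → ℝ) (Km : Matrix (Fin n) (Fin n) ℝ)
    (U0T : Fin L → Fin n → ℝ) (u : ℕ → Fin n → ℝ) (l : Fin L) :
    ∀ q, 1 ≤ q → q ≤ T + 1 → ∀ j,
    back (Wt T KL Km u l) (U0T l) (T+1-q) q j = psiM L n KL Km U0T u T (q-1) l j := by
  intro q
  induction q with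
  | zero => intro h; omega
  | succ q' ih =>
      intro _ hq j
      cases q' with
      | zero =>
          show (∑ i, Wt T KL Km u l (T+1-1) j i * U0T l i) = psiM L n KL Km U0T u T 0 l j
          rw [psiM]
          apply Finset.sum_congr rfl
          intro i _
          unfold Wt
          rw [if_neg (by omega : ¬ (T+1-1 < T))]
          ring
      | succ q'' =>
          show (∑ i, Wt T KL Km u l (T+1-(q''+2)) j i *
              back (Wt T KL Km u l) (U0T l) (T+1-(q''+2)+1) (q''+1) i)
            = psiM L n KL Km U0T u T (q''+1) l j
          have harg : T+1-(q''+2)+1 = T+1-(q''+1) := by omega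
          rw [harg]
          have hib : ∀ i, back (Wt T KL Km u l) (U0T l) (T+1-(q''+1)) (q''+1) i
              = psiM L n KL Km U0T u T q'' l i := ih (by omega) (by omega)
          rw [Finset.sum_congr rfl (fun i _ => by rw [hib i])]
          rw [psiM]
          apply Finset.sum_congr rfl
          intro i _
          unfold Wt
          rw [if_pos (by omega : T+1-(q''+2) < T)]
          have hu : T + 1 - (q''+2) = T - 1 - q'' := by omega
          rw [hu]
          ring

/-- Single-marginal projections of the multi-commodity structured tensor:
`P_t(K⊙U) = u_t ⊙ ((Ψ̂_t ⊙ Ψ_t ⊙ K_L)ᵀ 𝟏)` for middle marginals `t`, and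
`P₀(K⊙U) = (Ψ̂_t ⊙ Ψ_t ⊙ K_L) u_t` for any such `t`. -/
theorem stmt_13 (L n T : ℕ) (KL : Fin L → Fin n → ℝ)
    (Km : Matrix (Fin n) (Fin n) ℝ) (U01 U0T : Fin L → Fin n → ℝ)
    (u : ℕ → Fin n → ℝ) (hKL : ∀ l i, 0 ≤ KL l i) (hKm : ∀ i j, 0 ≤ Km i j)
    (hU01 : ∀ l i, 0 ≤ U01 l i) (hU0T : ∀ l i, 0 ≤ U0T l i)
    (hu : ∀ s i, 0 ≤ u s i) :
    (∀ (t : Fin T) (j : Fin n),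
      (∑ l : Fin L, ∑ x : Fin (T + 2) → Fin n,
          if x t.succ.castSucc = j then KU L n T KL Km U01 U0T u l x else 0)
        = u t.val j * ∑ l : Fin L,
            psihatM L n KL Km U01 u t.val l j *
              psiM L n KL Km U0T u T (T - 1 - t.val) l j * KL l j) ∧
    (∀ (t : Fin T) (l : Fin L),
      (∑ x : Fin (T + 2) → Fin n, KU L n T KL Km U01 U0T u l x)
        = ∑ j : Fin n,
            psihatM L n KL Km U01 u t.val l j *
              psiM L n KL Km U0T u T (T - 1 - t.val) l j * KL l j *
              u t.val j) := by
  have key : ∀ (t : Fin T) (l : Fin L) (j : Fin n),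
      (∑ x : Fin (T + 2) → Fin n,
          if x t.succ.castSucc = j then KU L n T KL Km U01 U0T u l x else 0)
        = psihatM L n KL Km U01 u t.val l j *
            psiM L n KL Km U0T u T (T - 1 - t.val) l j * KL l j * u t.val j := by
    intro t l j
    have ht : (t : ℕ) < T := t.isLt
    have hmm : (t.val + 1) + (T - t.val) = T + 1 := by omega
    have hpos : (t.succ.castSucc : Fin (T+2)) = ⟨t.val + 1, by omega⟩ := by
      ext
      simp
    have h1 : ∀ x : Fin (T+2) → Fin n,
        (if x t.succ.castSucc = j then KU L n T KL Km U01 U0T u l x else 0)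
        = (if x ⟨t.val + 1, by omega⟩ = j then
            U01 l (x 0) *
              ((∏ s : Fin (T+1), Wt T KL Km u l (0 + (s : ℕ)) (x s.castSucc) (x s.succ)) *
                U0T l (x (Fin.last (T+1))))
          else 0) := by
      intro x
      rw [hpos, KU_eq]
      simp only [Nat.zero_add]
    calc (∑ x : Fin (T + 2) → Fin n,
            if x t.succ.castSucc = j then KU L n T KL Km U01 U0T u l x else 0)
        = ∑ x : Fin (T + 2) → Fin n,
            (if x ⟨t.val + 1, by omega⟩ = j then
              U01 l (x 0) *
                ((∏ s : Fin (T+1), Wt T KL Km u l (0 + (s : ℕ)) (x s.castSucc) (x s.succ)) *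
                  U0T l (x (Fin.last (T+1))))
            else 0) := Finset.sum_congr rfl (fun x _ => h1 x)
      _ = fwd (Wt T KL Km u l) 0 (U01 l) (t.val + 1) j *
            back (Wt T KL Km u l) (U0T l) (0 + (t.val + 1)) (T - t.val) j :=
          sum_path_split (Wt T KL Km u l) (U0T l) (t.val + 1) (T+1) (T - t.val) 0 hmm (U01 l) j
      _ = psihatM L n KL Km U01 u t.val l j *
            psiM L n KL Km U0T u T (T - 1 - t.val) l j * KL l j * u t.val j := by
          rw [fwd_eq_psihat T KL Km U01 u l t.val ht j]
          have hback : (0 : ℕ) + (t.val + 1) = T + 1 - (T - t.val) := by omega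
          rw [hback]
          rw [back_eq_psi T KL Km U0T u l (T - t.val) (by omega) (by omega) j]
          have hq : T - t.val - 1 = T - 1 - t.val := by omega
          rw [hq]
          ring
  constructor
  · intro t j
    rw [Finset.sum_congr rfl (fun l _ => key t l j), Finset.mul_sum]
    exact Finset.sum_congr rfl (fun l _ => by ring)
  · intro t l
    have hx : ∀ x : Fin (T+2) → Fin n,
        KU L n T KL Km U01 U0T u l x
          = ∑ j : Fin n, if x t.succ.castSucc = j then KU L n T KL Km U01 U0T u l x else 0 := by
      intro x
      rw [Finset.sum_ite_eq]
      simp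
    rw [Finset.sum_congr rfl (fun x _ => hx x), Finset.sum_comm]
    exact Finset.sum_congr rfl (fun j _ => key t l j)

end Stmt13
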